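/- Let n ≥ 2 and let Q ≥ 3 be an integer. Let (G(k))_{k≥1} be rooted communication graphs on n nodes and Ĝ(ℓ) = G((ℓ−1)(n−1)+1) ∘ ⋯ ∘ G(ℓ(n−1)) the macro-round graphs. Let x : ℕ → ℝ^n be the quantized amortized mid-point execution: every x(0)_p lies in [0,1] and is an integer multiple of 1/Q, and for each ℓ ≥ 1 and each p, x(ℓ)_p = ⌊Q·(m_p + M_p)/2⌋/Q, where m_p and M_p are the minimum and maximum of {x(ℓ−1)_q : q ∈ In_p(Ĝ(ℓ))}. Then for every p there exists a real x*_p, an integer multiple of 1/Q, and an index ℓ_p such that x(ℓ)_p = x*_p for all ℓ ≥ ℓ_p; moreover, for every pair of processes p, q, either x*_p = x*_q or |x*_p − x*_q| = 1/Q. (In particular, there are at most two distinct limit values, so 2-set consensus is solvable in any rooted dynamic network model when decision values may be any values in the range of the initial values.) -/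
import Mathlib


/-- `δ(x) = max_p x_p − min_p x_p`. -/
noncomputable def delta {n : ℕ} (x : Fin n → ℝ) : ℝ :=
  sSup (Set.range x) - sInf (Set.range x)

/-- A communication graph is rooted if there is a node `r` from which every node is
reachable by a directed path. -/
def Rooted {n : ℕ} (E : Fin n → Fin n → Prop) : Prop :=
  ∃ r, ∀ p, Relation.ReflTransGen E r p

/-- `ProdSeg G a m` is the product `G (a+1) ∘ G (a+2) ∘ ⋯ ∘ G (a+m)`, where the product
`G ∘ H` has an edge `(p,q)` iff there is `r` with `(p,r) ∈ G` and `(r,q) ∈ H`;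
the empty product is the identity graph. -/
def ProdSeg {n : ℕ} (G : ℕ → Fin n → Fin n → Prop) (a : ℕ) : ℕ → Fin n → Fin n → Prop
  | 0 => fun p q => p = q
  | m + 1 => fun p q => ∃ r, ProdSeg G a m p r ∧ G (a + m + 1) r q

/-- Rounding down to the nearest multiple of `1/Q`. -/
noncomputable def roundQ (Q : ℕ) (v : ℝ) : ℝ := (⌊(Q : ℝ) * v⌋ : ℝ) / (Q : ℝ)

namespace QAMaux

lemma prodseg_refl {n : ℕ} (G : ℕ → Fin n → Fin n → Prop)
    (hrefl : ∀ k, 1 ≤ k → ∀ p, G k p p) (a m : ℕ) (p : Fin n) : ProdSeg G a m p p := by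
  induction m with
  | zero => exact rfl
  | succ m ih => exact ⟨p, ih, hrefl (a + m + 1) (by omega) p⟩

lemma crossing {n : ℕ} {H : Fin n → Fin n → Prop} {S : Finset (Fin n)} {u s : Fin n}
    (h : Relation.ReflTransGen H u s) (hu : u ∉ S) :
    s ∈ S → ∃ v w, v ∉ S ∧ w ∈ S ∧ H v w := by
  induction h with
  | refl => exact fun hs => absurd hs hu
  | tail h₁ h₂ ih =>
    intro hs
    rename_i b c
    by_cases hb : b ∈ S
    · exact ih hb
    · exact ⟨b, c, hb, hs, h₂⟩

lemma claim {n : ℕ} (G : ℕ → Fin n → Fin n → Prop)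
    (hrefl : ∀ k, 1 ≤ k → ∀ p, G k p p)
    (hrooted : ∀ k, 1 ≤ k → Rooted (G k)) :
    ∀ (m a : ℕ) (S T : Finset (Fin n)), S.Nonempty → T.Nonempty →
      n + 1 ≤ S.card + T.card + m →
      ∃ c : Fin n, (∃ s ∈ S, ProdSeg G a m c s) ∧ (∃ t ∈ T, ProdSeg G a m c t) := by
  intro m
  induction m with
  | zero =>
    intro a S T hS hT hcard
    have hint : (S ∩ T).Nonempty := by
      rw [← Finset.card_pos]
      have h1 : (S ∪ T).card + (S ∩ T).card = S.card + T.card :=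
        Finset.card_union_add_card_inter S T
      have h2 : (S ∪ T).card ≤ n := by
        have := Finset.card_le_univ (S ∪ T)
        simpa using this
      omega
    obtain ⟨c, hc⟩ := hint
    rw [Finset.mem_inter] at hc
    exact ⟨c, ⟨c, hc.1, rfl⟩, ⟨c, hc.2, rfl⟩⟩
  | succ m ih =>
    intro a S T hS hT hcard
    classical
    by_cases hST : (S ∩ T).Nonempty
    · obtain ⟨c, hc⟩ := hST
      rw [Finset.mem_inter] at hc
      exact ⟨c, ⟨c, hc.1, prodseg_refl G hrefl a (m+1) c⟩,
              ⟨c, hc.2, prodseg_refl G hrefl a (m+1) c⟩⟩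
    · have hdisj : S ∩ T = ∅ := Finset.not_nonempty_iff_eq_empty.mp hST
      set N : Finset (Fin n) → Finset (Fin n) :=
        fun X => Finset.univ.filter (fun v => ∃ w ∈ X, G (a + m + 1) v w) with hN
      have hmemN : ∀ (X : Finset (Fin n)) v, v ∈ N X ↔ ∃ w ∈ X, G (a + m + 1) v w := by
        intro X v; simp [hN]
      have hsub : ∀ X : Finset (Fin n), X ⊆ N X := by
        intro X v hv
        exact (hmemN X v).mpr ⟨v, hv, hrefl _ (by omega) v⟩
      have hgrow : S.card + T.card + 1 ≤ (N S).card + (N T).card := by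
        have hcardi : (N S ∪ N T).card + (N S ∩ N T).card = (N S).card + (N T).card :=
          Finset.card_union_add_card_inter _ _
        have hUsub : S ∪ T ⊆ N S ∪ N T := Finset.union_subset_union (hsub S) (hsub T)
        have hU : S.card + T.card = (S ∪ T).card := by
          rw [Finset.card_union_of_disjoint (Finset.disjoint_iff_inter_eq_empty.mpr hdisj)]
        by_cases hint : (N S ∩ N T).Nonempty
        · have h3 := Finset.card_le_card hUsub
          have h4 := Finset.card_pos.mpr hint
          omega
        · have hint' : N S ∩ N T = ∅ := Finset.not_nonempty_iff_eq_empty.mp hint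
          obtain ⟨ρ, hρ⟩ := hrooted (a + m + 1) (by omega)
          have aux : ∀ A B : Finset (Fin n), A.Nonempty → ρ ∉ A → N A ∩ N B = ∅ →
              ∃ v, v ∈ N A ∧ v ∉ A ∧ v ∉ B := by
            rintro A B ⟨s, hs⟩ hρA hAB
            obtain ⟨v, w, hvA, hwA, hvw⟩ := crossing (hρ s) hρA hs
            have hvNA : v ∈ N A := (hmemN A v).mpr ⟨w, hwA, hvw⟩
            refine ⟨v, hvNA, hvA, fun hvB => ?_⟩
            have : v ∈ N A ∩ N B := Finset.mem_inter.mpr ⟨hvNA, hsub B hvB⟩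
            simp [hAB] at this
          have hnotboth : ρ ∉ S ∨ ρ ∉ T := by
            by_contra h
            push_neg at h
            have : ρ ∈ S ∩ T := Finset.mem_inter.mpr ⟨h.1, h.2⟩
            simp [hdisj] at this
          have hv : ∃ v, v ∈ N S ∪ N T ∧ v ∉ S ∪ T := by
            rcases hnotboth with h | h
            · obtain ⟨v, h1, h2, h3⟩ := aux S T hS h hint'
              exact ⟨v, Finset.mem_union_left _ h1, by simp [h2, h3]⟩
            · obtain ⟨v, h1, h2, h3⟩ := aux T S hT h (by rw [Finset.inter_comm]; exact hint')
              exact ⟨v, Finset.mem_union_right _ h1, by simp [h2, h3]⟩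
          obtain ⟨v, hvin, hvout⟩ := hv
          have hins : insert v (S ∪ T) ⊆ N S ∪ N T := by
            intro u hu
            rcases Finset.mem_insert.mp hu with h | h
            · exact h ▸ hvin
            · exact hUsub h
          have h4 := Finset.card_le_card hins
          rw [Finset.card_insert_of_notMem hvout] at h4
          omega
      have hNS : (N S).Nonempty := hS.mono (hsub S)
      have hNT : (N T).Nonempty := hT.mono (hsub T)
      obtain ⟨c, ⟨s', hs', hps⟩, ⟨t', ht', hpt⟩⟩ := ih a (N S) (N T) hNS hNT (by omega)
      obtain ⟨s, hsS, hes⟩ := (hmemN S s').mp hs'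
      obtain ⟨t, htT, het⟩ := (hmemN T t').mp ht'
      exact ⟨c, ⟨s, hsS, ⟨s', hps, hes⟩⟩, ⟨t, htT, ⟨t', hpt, het⟩⟩⟩

lemma nonsplit {n : ℕ} (G : ℕ → Fin n → Fin n → Prop)
    (hrefl : ∀ k, 1 ≤ k → ∀ p, G k p p)
    (hrooted : ∀ k, 1 ≤ k → Rooted (G k))
    (hn : 1 ≤ n) (a : ℕ) (p q : Fin n) :
    ∃ c, ProdSeg G a (n - 1) c p ∧ ProdSeg G a (n - 1) c q := by
  obtain ⟨c, ⟨s, hs, hps⟩, ⟨t, ht, hpt⟩⟩ := claim G hrefl hrooted (n - 1) a {p} {q}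
    ⟨p, Finset.mem_singleton_self p⟩ ⟨q, Finset.mem_singleton_self q⟩
    (by simp only [Finset.card_singleton]; omega)
  rw [Finset.mem_singleton] at hs ht
  exact ⟨c, hs ▸ hps, ht ▸ hpt⟩

end QAMaux

theorem quantized_amortized_midpoint_limits
    (n Q : ℕ) (hn : 2 ≤ n) (hQ : 3 ≤ Q)
    (G : ℕ → Fin n → Fin n → Prop)
    (hrefl : ∀ k, 1 ≤ k → ∀ p, G k p p)
    (hrooted : ∀ k, 1 ≤ k → Rooted (G k))
    (x : ℕ → Fin n → ℝ)
    (hx0 : ∀ p, x 0 p ∈ Set.Icc (0 : ℝ) 1 ∧ ∃ z : ℤ, x 0 p = (z : ℝ) / (Q : ℝ))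
    -- at each macro-round `l ≥ 1`, each process `p` adopts the rounded mid-point
    -- `⌊Q·(m_p + M_p)/2⌋/Q` of the values received along the macro-round graph
    -- `Ĝ(l) = G((l−1)(n−1)+1) ∘ ⋯ ∘ G(l(n−1))`
    (hupd : ∀ l, 1 ≤ l → ∀ p,
      x l p = roundQ Q
        ((sInf (x (l - 1) '' {q | ProdSeg G ((l - 1) * (n - 1)) (n - 1) q p}) +
          sSup (x (l - 1) '' {q | ProdSeg G ((l - 1) * (n - 1)) (n - 1) q p})) / 2)) :
    ∃ xstar : Fin n → ℝ,
      (∀ p, (∃ z : ℤ, xstar p = (z : ℝ) / (Q : ℝ)) ∧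
        ∃ L : ℕ, ∀ l, L ≤ l → x l p = xstar p) ∧
      ∀ p q, xstar p = xstar q ∨ |xstar p - xstar q| = 1 / (Q : ℝ) := by
  classical
  haveI : Nonempty (Fin n) := ⟨⟨0, by omega⟩⟩
  have hQ0 : (0 : ℝ) < (Q : ℝ) := by exact_mod_cast (by omega : 0 < Q)
  have hQne : (Q : ℝ) ≠ 0 := ne_of_gt hQ0
  have hform : ∀ l p, ∃ z : ℤ, x l p = (z : ℝ) / Q := by
    intro l p
    cases l with
    | zero => exact (hx0 p).2
    | succ l =>
      rw [hupd (l + 1) (by omega) p]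
      exact ⟨_, rfl⟩
  choose y hxy using hform
  -- the one-step structure lemma
  have hstep : ∀ l p, ∃ i j : Fin n,
      ProdSeg G (l * (n - 1)) (n - 1) i p ∧ ProdSeg G (l * (n - 1)) (n - 1) j p ∧
      (∀ q, ProdSeg G (l * (n - 1)) (n - 1) q p → y l i ≤ y l q ∧ y l q ≤ y l j) ∧
      2 * y (l + 1) p ≤ y l i + y l j ∧ y l i + y l j ≤ 2 * y (l + 1) p + 1 := by
    intro l p
    have hpA : ProdSeg G (l * (n - 1)) (n - 1) p p := QAMaux.prodseg_refl G hrefl _ _ p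
    set A : Set (Fin n) := {q | ProdSeg G (l * (n - 1)) (n - 1) q p} with hA
    set S : Set ℝ := x l '' A with hS
    have hSfin : S.Finite := (Set.toFinite A).image _
    have hSne : S.Nonempty := ⟨x l p, p, hpA, rfl⟩
    obtain ⟨i, hiA, hix⟩ := hSne.csInf_mem hSfin
    obtain ⟨j, hjA, hjx⟩ := hSne.csSup_mem hSfin
    have hcast : ∀ a b : Fin n, x l a ≤ x l b → y l a ≤ y l b := by
      intro a b hab
      rw [hxy l a, hxy l b] at hab
      have h2 := mul_le_mul_of_nonneg_right hab hQ0.le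
      rw [div_mul_cancel₀ _ hQne, div_mul_cancel₀ _ hQne] at h2
      exact_mod_cast h2
    have hmin : ∀ q ∈ A, x l i ≤ x l q := by
      intro q hq
      rw [hix]
      exact csInf_le hSfin.bddBelow ⟨q, hq, rfl⟩
    have hmax : ∀ q ∈ A, x l q ≤ x l j := by
      intro q hq
      rw [hjx]
      exact le_csSup hSfin.bddAbove ⟨q, hq, rfl⟩
    have hupd' : x (l + 1) p = roundQ Q ((sInf S + sSup S) / 2) := by
      have := hupd (l + 1) (by omega) p
      simpa only [Nat.add_sub_cancel] using this
    have hxv : x (l + 1) p = ((⌊((y l i + y l j : ℤ) : ℝ) / 2⌋ : ℤ) : ℝ) / Q := by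
      rw [hupd', ← hix, ← hjx, hxy l i, hxy l j]
      unfold roundQ
      rw [show (Q : ℝ) * ((((y l i : ℤ) : ℝ) / Q + ((y l j : ℤ) : ℝ) / Q) / 2) =
          ((y l i + y l j : ℤ) : ℝ) / 2 by push_cast; field_simp]
    have he : y (l + 1) p = ⌊((y l i + y l j : ℤ) : ℝ) / 2⌋ := by
      have h1 := hxy (l + 1) p
      rw [hxv] at h1
      field_simp at h1
      exact_mod_cast h1.symm
    have hchar1 : 2 * y (l + 1) p ≤ y l i + y l j := by
      have h1 : ((y (l + 1) p : ℤ) : ℝ) ≤ ((y l i + y l j : ℤ) : ℝ) / 2 := by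
        rw [he]; exact Int.floor_le _
      have h2 : (2 : ℝ) * ((y (l + 1) p : ℤ) : ℝ) ≤ ((y l i + y l j : ℤ) : ℝ) := by linarith
      exact_mod_cast h2
    have hchar2 : y l i + y l j ≤ 2 * y (l + 1) p + 1 := by
      have h1 : ((y l i + y l j : ℤ) : ℝ) / 2 < ((y (l + 1) p : ℤ) : ℝ) + 1 := by
        rw [he]; exact Int.lt_floor_add_one _
      have h2 : ((y l i + y l j : ℤ) : ℝ) < 2 * ((y (l + 1) p : ℤ) : ℝ) + 2 := by linarith
      have h3 : (y l i + y l j : ℤ) < 2 * y (l + 1) p + 2 := by exact_mod_cast h2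
      omega
    exact ⟨i, j, hiA, hjA, fun q hq => ⟨hcast _ _ (hmin q hq), hcast _ _ (hmax q hq)⟩,
      hchar1, hchar2⟩
  have hne : (Finset.univ : Finset (Fin n)).Nonempty := Finset.univ_nonempty
  set gmin : ℕ → ℤ := fun l => Finset.univ.inf' hne (y l) with hgmin
  set gmax : ℕ → ℤ := fun l => Finset.univ.sup' hne (y l) with hgmax
  have hgb : ∀ l p, gmin l ≤ y l p ∧ y l p ≤ gmax l :=
    fun l p => ⟨Finset.inf'_le _ (Finset.mem_univ p), Finset.le_sup' _ (Finset.mem_univ p)⟩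
  have hstep2 : ∀ l p, gmin l ≤ y (l + 1) p ∧ y (l + 1) p ≤ gmax l := by
    intro l p
    obtain ⟨i, j, hi, hj, hmm, h1, h2⟩ := hstep l p
    have hbi := hgb l i
    have hbj := hgb l j
    omega
  have hmono : ∀ l, gmin l ≤ gmin (l + 1) ∧ gmax (l + 1) ≤ gmax l := by
    intro l
    constructor
    · exact Finset.le_inf' hne _ (fun p _ => (hstep2 l p).1)
    · exact Finset.sup'_le hne _ (fun p _ => (hstep2 l p).2)
  have hminmono : ∀ l₁ l₂, l₁ ≤ l₂ → gmin l₁ ≤ gmin l₂ := by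
    intro l₁ l₂ h
    induction l₂, h using Nat.le_induction with
    | base => exact le_refl _
    | succ l₂ h ih => exact le_trans ih (hmono l₂).1
  have hcontr : ∀ l, 2 * (gmax (l + 1) - gmin (l + 1)) ≤ (gmax l - gmin l) + 1 := by
    intro l
    obtain ⟨p₀, -, hp₀⟩ := Finset.exists_mem_eq_sup' hne (y (l + 1))
    obtain ⟨q₀, -, hq₀⟩ := Finset.exists_mem_eq_inf' hne (y (l + 1))
    obtain ⟨c, hcp, hcq⟩ := QAMaux.nonsplit G hrefl hrooted (by omega) (l * (n - 1)) p₀ q₀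
    obtain ⟨i, j, hi, hj, hmmp, h1, h2⟩ := hstep l p₀
    obtain ⟨i', j', hi', hj', hmmq, h1', h2'⟩ := hstep l q₀
    have e1 : gmax (l + 1) = y (l + 1) p₀ := hp₀
    have e2 : gmin (l + 1) = y (l + 1) q₀ := hq₀
    have b1 := (hmmp c hcp).1
    have b2 := (hmmq c hcq).2
    have b3 := (hgb l j).2
    have b4 := (hgb l i').1
    omega
  have hDnn : ∀ l, 0 ≤ gmax l - gmin l := by
    intro l
    have := hgb l (Classical.arbitrary _)
    omega
  have hkey : ∀ k : ℕ, gmax k - gmin k ≤ 1 ∨ gmax k - gmin k ≤ gmax 0 - gmin 0 - k := by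
    intro k
    induction k with
    | zero => right; omega
    | succ k ih =>
      have hc := hcontr k
      have h0 := hDnn k
      have h1 := hDnn (k + 1)
      push_cast
      push_cast at ih
      rcases ih with h | h
      · left; omega
      · omega
  obtain ⟨L, hL⟩ : ∃ L : ℕ, ∀ l, L ≤ l → gmax l - gmin l ≤ 1 := by
    refine ⟨(gmax 0 - gmin 0).toNat + 1, ?_⟩
    intro l hl
    rcases hkey l with h | h
    · exact h
    · have h0 := hDnn 0
      have h1 := hDnn l
      omega
  have hanti : ∀ l, L ≤ l → ∀ p, y (l + 1) p ≤ y l p := by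
    intro l hl p
    obtain ⟨i, j, hi, hj, hmm', h1, h2⟩ := hstep l p
    have hp := hmm' p (QAMaux.prodseg_refl G hrefl _ _ p)
    have h3 := hL l hl
    have h4 := (hgb l j).2
    have h5 := (hgb l p).1
    omega
  have hchain : ∀ p l₁ l₂, L ≤ l₁ → l₁ ≤ l₂ → y l₂ p ≤ y l₁ p := by
    intro p l₁ l₂ hL1 h
    induction l₂, h using Nat.le_induction with
    | base => exact le_refl _
    | succ l₂ h ih => exact le_trans (hanti l₂ (le_trans hL1 h) p) ih
  have hlim : ∀ p, ∃ z : ℤ, ∃ l₀, L ≤ l₀ ∧ ∀ l, l₀ ≤ l → y l p = z := by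
    intro p
    obtain ⟨z₀, hz₀, hleast⟩ := Int.exists_least_of_bdd
      (P := fun z : ℤ => ∃ l, L ≤ l ∧ y l p = z)
      ⟨gmin L, by
        rintro z ⟨l, hl, rfl⟩
        exact le_trans (hminmono L l hl) (hgb l p).1⟩
      ⟨y L p, L, le_refl _, rfl⟩
    obtain ⟨l₀, hl₀L, hyl₀⟩ := hz₀
    refine ⟨z₀, l₀, hl₀L, fun l hl => le_antisymm ?_ ?_⟩
    · rw [← hyl₀]
      exact hchain p l₀ l hl₀L hl
    · exact hleast _ ⟨l, le_trans hl₀L hl, rfl⟩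
  choose z l₀ hl₀L hz using hlim
  refine ⟨fun p => ((z p : ℤ) : ℝ) / Q, fun p => ⟨⟨z p, rfl⟩, l₀ p, fun l hl => ?_⟩, ?_⟩
  · rw [hxy l p, hz p l hl]
  · intro p q
    show ((z p : ℤ) : ℝ) / Q = ((z q : ℤ) : ℝ) / Q ∨
      |((z p : ℤ) : ℝ) / Q - ((z q : ℤ) : ℝ) / Q| = 1 / (Q : ℝ)
    set l := max (l₀ p) (l₀ q) with hldef
    have h1 : y l p = z p := hz p l (le_max_left _ _)
    have h2 : y l q = z q := hz q l (le_max_right _ _)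
    have h3 : gmax l - gmin l ≤ 1 := hL l (le_trans (hl₀L p) (le_max_left _ _))
    have h4 := hgb l p
    have h5 := hgb l q
    have hzz : z p = z q ∨ z p - z q = 1 ∨ z q - z p = 1 := by omega
    rcases hzz with h | h | h
    · left; rw [h]
    · right
      have hc : ((z p : ℤ) : ℝ) - ((z q : ℤ) : ℝ) = 1 := by exact_mod_cast h
      have : ((z p : ℤ) : ℝ) / Q - ((z q : ℤ) : ℝ) / Q = 1 / Q := by
        rw [div_sub_div_same, hc]
      rw [this, abs_of_pos (by positivity)]
    · right
      have hc : ((z q : ℤ) : ℝ) - ((z p : ℤ) : ℝ) = 1 := by exact_mod_cast h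
      have : ((z p : ℤ) : ℝ) / Q - ((z q : ℤ) : ℝ) / Q = -(1 / Q) := by
        rw [div_sub_div_same, show ((z p : ℤ) : ℝ) - ((z q : ℤ) : ℝ) = -1 by linarith]
        ring
      rw [this, abs_neg, abs_of_pos (by positivity)]
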